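/- arXiv:1408.2662 — 9 statements merged into one kernel-verified Lean document; each statement's English description precedes it below -/
import Mathlib

section
/- Any k-CNF formula on n variables has at most 2^{(1 - 1/k)n} isolated satisfying assignments, where a satisfying assignment is isolated if flipping the value of any single variable yields a non-satisfying assignment. -/
variable {V : Type*}

abbrev Lit (V : Type*) := V × Bool

def evalLit (α : V → Bool) (l : Lit V) : Bool := α l.1 == l.2

abbrev Clause2 (V : Type*) := Lit V × Lit V
abbrev CNF2 (V : Type*) := List (Clause2 V)
abbrev CNF (V : Type*) := List (List (Lit V))

def sat2 (α : V → Bool) (F : CNF2 V) : Prop :=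
  ∀ c ∈ F, evalLit α c.1 = true ∨ evalLit α c.2 = true

def satCNF (α : V → Bool) (F : CNF V) : Prop :=
  ∀ C ∈ F, ∃ l ∈ C, evalLit α l = true

def kCNF (k : ℕ) (F : CNF V) : Prop := ∀ C ∈ F, C.length ≤ k

def extendsR (α : V → Bool) (ρ : V → Option Bool) : Prop :=
  ∀ v b, ρ v = some b → α v = b

def unfix [DecidableEq V] (ρ : V → Option Bool) (v : V) : V → Option Bool :=
  Function.update ρ v none

def implicant2 (ρ : V → Option Bool) (F : CNF2 V) : Prop :=
  ∀ α, extendsR α ρ → sat2 α F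

def primeImplicant2 [DecidableEq V] (ρ : V → Option Bool) (F : CNF2 V) : Prop :=
  implicant2 ρ F ∧ ∀ v, ρ v ≠ none → ¬ implicant2 (unfix ρ v) F

def partialPI [DecidableEq V] (ρ : V → Option Bool) (F : CNF2 V) : Prop :=
  primeImplicant2 ρ F ∧ ∃ v, ρ v = none

def implicantC (ρ : V → Option Bool) (F : CNF V) : Prop :=
  ∀ α, extendsR α ρ → satCNF α F

def primeImplicantC [DecidableEq V] (ρ : V → Option Bool) (F : CNF V) : Prop :=
  implicantC ρ F ∧ ∀ v, ρ v ≠ none → ¬ implicantC (unfix ρ v) F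

def implicantF (ρ : V → Option Bool) (f : (V → Bool) → Bool) : Prop :=
  ∀ α, extendsR α ρ → f α = true

def primeImplicantF [DecidableEq V] (ρ : V → Option Bool) (f : (V → Bool) → Bool) : Prop :=
  implicantF ρ f ∧ ∀ v, ρ v ≠ none → ¬ implicantF (unfix ρ v) f

def negLit (l : Lit V) : Lit V := (l.1, !l.2)

def edge (F : CNF2 V) (u v : Lit V) : Prop :=
  ∃ c ∈ F, (u = negLit c.1 ∧ v = c.2) ∨ (u = negLit c.2 ∧ v = c.1)

def impliesL (F : CNF2 V) : Lit V → Lit V → Prop := Relation.TransGen (edge F)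

def onCycle (F : CNF2 V) (u : Lit V) : Prop := impliesL F u u

def acyclicD (F : CNF2 V) : Prop := ∀ u, ¬ onCycle F u

def looplessD (F : CNF2 V) : Prop := ∀ u, ¬ edge F u u

def litVal (ρ : V → Option Bool) (l : Lit V) : Option Bool := (ρ l.1).map (· == l.2)

def Aset (ρ : V → Option Bool) : Set (Lit V) := {l | litVal ρ l = some false}
def Bset (ρ : V → Option Bool) : Set (Lit V) := {l | litVal ρ l = some true}
def Cset (ρ : V → Option Bool) : Set (Lit V) := {l | litVal ρ l = none}

def Nminus (F : CNF2 V) (S : Set (Lit V)) : Set (Lit V) :=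
  {u | u ∉ S ∧ ∃ v ∈ S, impliesL F u v}
def Nplus (F : CNF2 V) (S : Set (Lit V)) : Set (Lit V) :=
  {v | v ∉ S ∧ ∃ u ∈ S, impliesL F u v}

def Tfml (m : ℕ) : CNF2 (Fin m × Fin 3) :=
  (List.finRange m).flatMap (fun i =>
    [(((i, 0), true), ((i, 1), true)),
     (((i, 1), true), ((i, 2), true)),
     (((i, 0), true), ((i, 2), true))])

def adjVar (F : CNF2 V) (x y : V) : Prop :=
  x ≠ y ∧ ∃ u v : Lit V, u.1 = x ∧ v.1 = y ∧ (impliesL F u v ∨ impliesL F v u)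

/-! Paturi–Pudlák–Zane: fix a ranking σ of the variables and a solution α. Call v forced if
some clause of F containing the literal (v, α v) has all its other literals falsified by α on
variables ranked before v. Two solutions cannot agree on the forced variables of both up to
their first disagreement, so the cubes obtained from the solutions by freeing their forced
variables are disjoint, and `∑_α 2^|forced σ α| ≤ 2^n` for every σ. At an isolated solution
each v has a critical clause, where (v, α v) is the only true literal; v is forced whenever it
is ranked last among the at most k variables of that clause, which happens for at least a
1/k fraction of the rankings. So a solution has on average at least n/k forced variables, and
by convexity the average of 2^|forced σ α| over σ is at least 2^(n/k). -/

open Finset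

lemma Finset.card_mul_exp_le_sum_exp {ι : Type*} (s : Finset ι) (x : ι → ℝ) {a : ℝ}
    (h : #s * a ≤ ∑ i ∈ s, x i) : #s * Real.exp a ≤ ∑ i ∈ s, Real.exp (x i) :=
  calc (#s : ℝ) * Real.exp a ≤ ∑ i ∈ s, Real.exp a * (x i - a + 1) := by
        rw [← mul_sum, sum_add_distrib, sum_sub_distrib, sum_const, sum_const, nsmul_eq_mul,
          nsmul_eq_mul, mul_one, mul_comm]
        nlinarith [Real.exp_pos a]
    _ ≤ ∑ i ∈ s, Real.exp (x i) := sum_le_sum fun i _ =>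
        calc Real.exp a * (x i - a + 1) ≤ Real.exp a * Real.exp (x i - a) :=
              mul_le_mul_of_nonneg_left (Real.add_one_le_exp _) (Real.exp_nonneg _)
          _ = Real.exp (x i) := by rw [← Real.exp_add, add_sub_cancel]

section Clauses

variable [DecidableEq V] {F : CNF V} {α : V → Bool}

def IsIsolatedSolution (F : CNF V) (α : V → Bool) : Prop :=
  satCNF α F ∧ ∀ v, ¬ satCNF (Function.update α v (!(α v))) F

def clauseVars (C : List (Lit V)) : Finset V := (C.map Prod.fst).toFinset

lemma mem_clauseVars {C : List (Lit V)} {l : Lit V} (hl : l ∈ C) : l.1 ∈ clauseVars C :=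
  List.mem_toFinset.2 (List.mem_map_of_mem (f := Prod.fst) hl)

lemma card_clauseVars_le (C : List (Lit V)) : #(clauseVars C) ≤ C.length :=
  (List.toFinset_card_le _).trans (List.length_map (f := Prod.fst)).le

lemma evalLit_update_not (α : V → Bool) (v : V) (l : Lit V) :
    evalLit (Function.update α v (!(α v))) l = (evalLit α l ^^ decide (l.1 = v)) := by
  by_cases h : l.1 = v
  · subst h
    simp only [evalLit, Function.update_self, decide_true]
    cases α l.1 <;> cases l.2 <;> rfl
  · simp [evalLit, h]

lemma IsIsolatedSolution.exists_critical_clause (h : IsIsolatedSolution F α) (v : V) :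
    ∃ C ∈ F, (v, α v) ∈ C ∧ ∀ l ∈ C, evalLit α l = decide (l.1 = v) := by
  obtain ⟨hsat, hiso⟩ := h
  simp only [satCNF, not_forall, not_exists, not_and, evalLit_update_not,
    Bool.not_eq_true, Bool.xor, bne_eq_false_iff_eq] at hiso
  obtain ⟨C, hC, hcrit⟩ := hiso v
  refine ⟨C, hC, ?_, hcrit⟩
  obtain ⟨⟨x, b⟩, hl, htrue⟩ := hsat C hC
  obtain rfl : x = v := by simpa [hcrit _ hl] using htrue
  obtain rfl : b = α x := (beq_iff_eq.1 htrue).symm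
  exact hl

end Clauses

abbrev Ranking (V : Type*) [Fintype V] := V ≃ Fin (Fintype.card V)

section Rankings

variable [Fintype V] [DecidableEq V]

def IsLastIn (σ : Ranking V) (W : Finset V) (v : V) : Prop := ∀ w ∈ W, w ≠ v → σ w < σ v

instance (σ : Ranking V) (W : Finset V) (v : V) : Decidable (IsLastIn σ W v) := by
  unfold IsLastIn; infer_instance

lemma IsLastIn.swap {σ : Ranking V} {W : Finset V} {v w : V} (h : IsLastIn σ W v)
    (hv : v ∈ W) (hw : w ∈ W) : IsLastIn ((Equiv.swap v w).trans σ) W w := by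
  intro u hu huw
  simp only [Equiv.trans_apply, Equiv.swap_apply_right]
  refine h _ ?_ ?_
  · rcases eq_or_ne u v with rfl | huv
    · rwa [Equiv.swap_apply_left]
    · rwa [Equiv.swap_apply_of_ne_of_ne huv huw]
  · rwa [Ne, Equiv.swap_apply_eq_iff, Equiv.swap_apply_left]

lemma card_filter_isLastIn (σ : Ranking V) {W : Finset V} (hW : W.Nonempty) :
    #{v ∈ W | IsLastIn σ W v} = 1 := by
  obtain ⟨v, hv, hmax⟩ := exists_max_image W σ hW
  have hlast : IsLastIn σ W v := fun w hw hwv =>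
    (hmax w hw).lt_of_ne fun h => hwv (σ.injective h)
  refine card_eq_one.2 ⟨v, eq_singleton_iff_unique_mem.2 ⟨mem_filter.2 ⟨hv, hlast⟩, ?_⟩⟩
  rintro u hu
  rw [mem_filter] at hu
  by_contra huv
  exact (hlast u hu.1 huv).asymm (hu.2 v hv (Ne.symm huv))

lemma card_isLastIn_mul_card {W : Finset V} {v : V} (hv : v ∈ W) :
    #{σ : Ranking V | IsLastIn σ W v} * #W = Fintype.card (Ranking V) := by
  have hsymm : ∀ w ∈ W,
      #{σ : Ranking V | IsLastIn σ W w} = #{σ : Ranking V | IsLastIn σ W v} :=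
    fun w hw => card_bij' (fun σ _ => (Equiv.swap w v).trans σ)
      (fun σ _ => (Equiv.swap v w).trans σ)
      (fun σ hσ => by simpa using (mem_filter.1 hσ).2.swap hw hv)
      (fun σ hσ => by simpa using (mem_filter.1 hσ).2.swap hv hw)
      (fun σ _ => by ext; simp [Equiv.swap_comm w v])
      (fun σ _ => by ext; simp [Equiv.swap_comm w v])
  calc #{σ : Ranking V | IsLastIn σ W v} * #W
      = ∑ w ∈ W, #{σ : Ranking V | IsLastIn σ W w} := by
        rw [sum_congr rfl hsymm, sum_const, smul_eq_mul, mul_comm]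
    _ = ∑ σ : Ranking V, #{w ∈ W | IsLastIn σ W w} :=
        sum_card_bipartiteAbove_eq_sum_card_bipartiteBelow (fun w σ => IsLastIn σ W w)
    _ = Fintype.card (Ranking V) := by
        simp [card_filter_isLastIn _ ⟨v, hv⟩]

end Rankings

section Forcing

variable [Fintype V] [DecidableEq V] {F : CNF V} {σ : Ranking V} {α α' : V → Bool} {v : V}

def IsForced (F : CNF V) (σ : Ranking V) (α : V → Bool) (v : V) : Prop :=
  ∃ C ∈ F, (v, α v) ∈ C ∧ ∀ l ∈ C, l ≠ (v, α v) → evalLit α l = false ∧ σ l.1 < σ v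

instance (F : CNF V) (σ : Ranking V) (α : V → Bool) : DecidablePred (IsForced F σ α) :=
  fun _ => by unfold IsForced; infer_instance

def forcedSet (F : CNF V) (σ : Ranking V) (α : V → Bool) : Finset V := {v | IsForced F σ α v}

lemma isForced_of_isLastIn {C : List (Lit V)} (hC : C ∈ F) (hvC : (v, α v) ∈ C)
    (hcrit : ∀ l ∈ C, evalLit α l = decide (l.1 = v)) (hlast : IsLastIn σ (clauseVars C) v) :
    IsForced F σ α v := by
  refine ⟨C, hC, hvC, fun l hl hne => ?_⟩
  have hlv : l.1 ≠ v := by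
    rintro rfl
    have hb : l.2 = α l.1 := (beq_iff_eq.1 ((hcrit l hl).trans (decide_eq_true rfl))).symm
    exact hne (Prod.ext rfl hb)
  exact ⟨(hcrit l hl).trans (decide_eq_false hlv), hlast _ (mem_clauseVars hl) hlv⟩

lemma IsForced.apply_eq (h : IsForced F σ α v) (hα' : satCNF α' F)
    (hagree : ∀ w, σ w < σ v → α' w = α w) : α' v = α v := by
  obtain ⟨C, hC, hvC, hforced⟩ := h
  obtain ⟨l, hl, htrue⟩ := hα' C hC
  by_cases hne : l = (v, α v)
  · subst hne
    exact beq_iff_eq.1 htrue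
  · obtain ⟨hfalse, hlt⟩ := hforced l hl hne
    rw [evalLit, hagree _ hlt] at htrue
    exact absurd (hfalse.symm.trans htrue) Bool.false_ne_true

def cube (α : V → Bool) (T : Finset V) : Finset (V → Bool) :=
  Fintype.piFinset fun v => if v ∈ T then univ else {α v}

lemma mem_cube {α β : V → Bool} {T : Finset V} : β ∈ cube α T ↔ ∀ v ∉ T, β v = α v := by
  simp only [cube, Fintype.mem_piFinset]
  refine forall_congr' fun v => ?_
  split_ifs with hv <;> simp [hv]

lemma card_cube (α : V → Bool) (T : Finset V) : #(cube α T) = 2 ^ #T := by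
  simp [cube, Fintype.card_piFinset, apply_ite card, prod_ite_mem]

lemma disjoint_cube_forcedSet (hα : satCNF α F) (hα' : satCNF α' F) (hne : α ≠ α') :
    Disjoint (cube α (forcedSet F σ α)) (cube α' (forcedSet F σ α')) := by
  obtain ⟨v, hv, hfirst⟩ := exists_min_image {w | α w ≠ α' w} σ
    (Function.ne_iff.1 hne |>.imp fun w hw => mem_filter.2 ⟨mem_univ w, hw⟩)
  have hagree : ∀ w, σ w < σ v → α' w = α w := fun w hw => by
    by_contra hne
    exact (hfirst w (mem_filter.2 ⟨mem_univ w, Ne.symm hne⟩)).not_gt hw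
  have hdiff : α v ≠ α' v := (mem_filter.1 hv).2
  have hα_free : v ∉ forcedSet F σ α := fun hf =>
    hdiff ((mem_filter.1 hf).2.apply_eq hα' hagree).symm
  have hα'_free : v ∉ forcedSet F σ α' := fun hf =>
    hdiff ((mem_filter.1 hf).2.apply_eq hα fun w hw => (hagree w hw).symm)
  exact disjoint_left.2 fun β hβ hβ' =>
    hdiff ((mem_cube.1 hβ v hα_free).symm.trans (mem_cube.1 hβ' v hα'_free))

lemma sum_two_pow_card_forcedSet_le (σ : Ranking V) {S : Finset (V → Bool)}
    (hS : ∀ α ∈ S, satCNF α F) :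
    ∑ α ∈ S, 2 ^ #(forcedSet F σ α) ≤ 2 ^ Fintype.card V :=
  calc ∑ α ∈ S, 2 ^ #(forcedSet F σ α)
      = #(S.biUnion fun α => cube α (forcedSet F σ α)) := by
        rw [card_biUnion fun α hα α' hα' hne => disjoint_cube_forcedSet (hS α hα) (hS α' hα') hne]
        simp only [card_cube]
    _ ≤ Fintype.card (V → Bool) := card_le_univ _
    _ = 2 ^ Fintype.card V := by simp

lemma IsIsolatedSolution.card_mul_card_le_sum_card_forcedSet {k : ℕ} (hF : kCNF k F)
    (h : IsIsolatedSolution F α) :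
    Fintype.card V * Fintype.card (Ranking V) ≤ k * ∑ σ : Ranking V, #(forcedSet F σ α) := by
  have hv : ∀ v, Fintype.card (Ranking V) ≤ k * #{σ : Ranking V | IsForced F σ α v} := by
    intro v
    obtain ⟨C, hC, hvC, hcrit⟩ := h.exists_critical_clause v
    calc Fintype.card (Ranking V)
        = #{σ : Ranking V | IsLastIn σ (clauseVars C) v} * #(clauseVars C) :=
          (card_isLastIn_mul_card (mem_clauseVars hvC)).symm
      _ ≤ #{σ : Ranking V | IsForced F σ α v} * k := by
          refine Nat.mul_le_mul (card_le_card fun σ hσ => ?_)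
            ((card_clauseVars_le C).trans (hF C hC))
          exact mem_filter.2 ⟨mem_univ σ, isForced_of_isLastIn hC hvC hcrit (mem_filter.1 hσ).2⟩
      _ = k * #{σ : Ranking V | IsForced F σ α v} := mul_comm _ _
  calc Fintype.card V * Fintype.card (Ranking V)
      ≤ ∑ v : V, k * #{σ : Ranking V | IsForced F σ α v} := by
        simpa using sum_le_sum fun v (_ : v ∈ univ) => hv v
    _ = k * ∑ σ : Ranking V, #(forcedSet F σ α) := by
        rw [← mul_sum]
        exact congrArg (k * ·)
          (sum_card_bipartiteAbove_eq_sum_card_bipartiteBelow fun v σ => IsForced F σ α v)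

lemma IsIsolatedSolution.card_mul_two_rpow_le_sum {k : ℕ} (hk : 0 < k) (hF : kCNF k F)
    (h : IsIsolatedSolution F α) :
    (Fintype.card (Ranking V) : ℝ) * 2 ^ ((Fintype.card V : ℝ) / k)
      ≤ ∑ σ : Ranking V, (2 : ℝ) ^ #(forcedSet F σ α) := by
  have hcount : (Fintype.card (Ranking V) : ℝ) * (Fintype.card V / k)
      ≤ ∑ σ : Ranking V, (#(forcedSet F σ α) : ℝ) := by
    rw [mul_div_assoc', div_le_iff₀' (by exact_mod_cast hk), mul_comm]
    exact_mod_cast h.card_mul_card_le_sum_card_forcedSet hF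
  have hlog : (0 : ℝ) ≤ Real.log 2 := Real.log_nonneg one_le_two
  simpa [Real.rpow_def_of_pos two_pos, ← Real.rpow_natCast, mul_comm, mul_left_comm]
    using card_mul_exp_le_sum_exp univ (fun σ => Real.log 2 * #(forcedSet F σ α))
      (a := Real.log 2 * (Fintype.card V / k)) (by
        rw [← mul_sum, mul_left_comm]; exact mul_le_mul_of_nonneg_left hcount hlog)

end Forcing

theorem isolated_solutions_bound {n k : ℕ} (hk : 1 ≤ k) (F : CNF (Fin n)) (hF : kCNF k F) :
    ({α : Fin n → Bool | satCNF α F ∧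
        ∀ v, ¬ satCNF (Function.update α v (!(α v))) F}.ncard : ℝ)
      ≤ (2 : ℝ) ^ ((1 - 1 / (k : ℝ)) * (n : ℝ)) := by
  classical
  set I := Set.toFinset {α : Fin n → Bool | IsIsolatedSolution F α}
  have hI : {α : Fin n → Bool | satCNF α F ∧
      ∀ v, ¬ satCNF (Function.update α v (!(α v))) F}.ncard = #I := by
    rw [← Set.ncard_coe_finset, Set.coe_toFinset]
    rfl
  set N : ℝ := (Fintype.card (Ranking (Fin n)) : ℝ)
  have hN : 0 < N := Nat.cast_pos.2 (Fintype.card_pos_iff.2 ⟨Fintype.equivFin _⟩)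
  have hdouble : #I * (N * 2 ^ ((n : ℝ) / k)) ≤ N * 2 ^ n := calc
    #I * (N * 2 ^ ((n : ℝ) / k))
      ≤ ∑ α ∈ I, ∑ σ : Ranking (Fin n), (2 : ℝ) ^ #(forcedSet F σ α) := by
        rw [← nsmul_eq_mul, ← sum_const]
        exact sum_le_sum fun α hα => by
          simpa only [Fintype.card_fin] using
            (Set.mem_toFinset.1 hα).card_mul_two_rpow_le_sum hk hF
    _ = ∑ σ : Ranking (Fin n), ∑ α ∈ I, (2 : ℝ) ^ #(forcedSet F σ α) := sum_comm
    _ ≤ ∑ _σ : Ranking (Fin n), (2 : ℝ) ^ n := sum_le_sum fun σ _ => by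
        have := sum_two_pow_card_forcedSet_le σ fun α (hα : α ∈ I) => (Set.mem_toFinset.1 hα).1
        simp only [Fintype.card_fin] at this
        exact_mod_cast this
    _ = N * 2 ^ n := by simp [N]
  rw [hI, show (1 - 1 / (k : ℝ)) * n = n - n / k by ring, Real.rpow_sub two_pos,
    Real.rpow_natCast, le_div_iff₀ (by positivity)]
  rw [mul_left_comm] at hdouble
  exact le_of_mul_le_mul_left hdouble hN
end

section
/- Any simple undirected graph on n vertices has at most 3^{n/3} maximal independent sets. -/
variable {V : Type*}

/-!
Let `A` be a vertex set and `v ∈ A` a vertex of minimum degree `d` in `G[A]`. A maximal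
independent set of `G[A]` contains some vertex `u` of the closed neighbourhood `N[v]`, and removing
`u` leaves a maximal independent set of `G[A \ N[u]]`, a graph on at most `|A| - d - 1` vertices.
By induction the count is at most `(d + 1) · 3 ^ ((|A| - d - 1) / 3) ≤ 3 ^ (|A| / 3)`, using
`k ≤ 3 ^ (k / 3)` for natural numbers `k`.
-/

open Finset

lemma pow_three_le_three_pow (k : ℕ) : k ^ 3 ≤ 3 ^ k := by
  induction k with
  | zero => norm_num
  | succ k ih =>
    rcases lt_or_ge k 3 with hk | hk
    · interval_cases k <;> norm_num
    · calc (k + 1) ^ 3 ≤ 3 * k ^ 3 := by nlinarith [Nat.mul_le_mul_right (k ^ 2) hk]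
        _ ≤ 3 * 3 ^ k := by gcongr
        _ = 3 ^ (k + 1) := by ring

lemma natCast_le_three_rpow_div_three (k : ℕ) : (k : ℝ) ≤ 3 ^ ((k : ℝ) / 3) := by
  refine le_of_pow_le_pow_left₀ three_ne_zero (by positivity) ?_
  rw [← Real.rpow_mul_natCast (by norm_num), Nat.cast_ofNat, div_mul_cancel₀ _ three_ne_zero,
    Real.rpow_natCast]
  exact_mod_cast pow_three_le_three_pow k

lemma natCast_mul_three_rpow_sub_le (k : ℕ) (x : ℝ) :
    k * (3 : ℝ) ^ ((x - k) / 3) ≤ 3 ^ (x / 3) := by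
  calc k * (3 : ℝ) ^ ((x - k) / 3) ≤ 3 ^ ((k : ℝ) / 3) * 3 ^ ((x - k) / 3) := by
        gcongr; exact natCast_le_three_rpow_div_three k
    _ = 3 ^ (x / 3) := by rw [← Real.rpow_add three_pos]; ring_nf

namespace SimpleGraph

variable {W : Type*} (G : SimpleGraph W)

/-- `S` is a maximal independent set of `G.induce A`; maximality is stated as domination. -/
def IsMaximalIndepSetIn (A S : Finset W) : Prop :=
  S ⊆ A ∧ G.IsIndepSet (S : Set W) ∧ ∀ x ∈ A, x ∉ S → ∃ y ∈ S, G.Adj x y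

open Classical in
noncomputable def maximalIndepSetsIn (A : Finset W) : Finset (Finset W) :=
  A.powerset.filter (G.IsMaximalIndepSetIn A)

variable {G}

lemma mem_maximalIndepSetsIn {A S : Finset W} :
    S ∈ G.maximalIndepSetsIn A ↔ G.IsMaximalIndepSetIn A S := by
  classical
  simp only [maximalIndepSetsIn, mem_filter, mem_powerset, and_iff_right_iff_imp]
  exact And.left

lemma isMaximalIndepSetIn_univ_toFinset [Fintype W] {S : Set W} [Fintype S]
    (hind : ∀ a ∈ S, ∀ b ∈ S, ¬ G.Adj a b)
    (hmax : ∀ T : Set W, S ⊆ T → (∀ a ∈ T, ∀ b ∈ T, ¬ G.Adj a b) → T = S) :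
    G.IsMaximalIndepSetIn univ S.toFinset := by
  refine ⟨subset_univ _, by
    rw [Set.coe_toFinset]; exact fun a ha b hb _ => hind a ha b hb, fun x _ hxS => ?_⟩
  by_contra! hnadj
  simp only [Set.mem_toFinset] at hxS hnadj
  have hins : ∀ a ∈ insert x S, ∀ b ∈ insert x S, ¬ G.Adj a b := by
    rintro a (rfl | ha) b (rfl | hb)
    exacts [G.irrefl, hnadj b hb, fun h => hnadj a ha h.symm, hind a ha b hb]
  exact hxS (hmax _ (Set.subset_insert x S) hins ▸ Set.mem_insert x S)

variable [DecidableEq W] [DecidableRel G.Adj] {A S : Finset W} {u v : W}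

lemma IsMaximalIndepSetIn.exists_mem_insert_filter_adj (hS : G.IsMaximalIndepSetIn A S)
    (hv : v ∈ A) : ∃ u ∈ insert v {x ∈ A | G.Adj v x}, u ∈ S := by
  by_cases hvS : v ∈ S
  · exact ⟨v, mem_insert_self _ _, hvS⟩
  · obtain ⟨y, hyS, hvy⟩ := hS.2.2 v hv hvS
    exact ⟨y, mem_insert_of_mem (mem_filter.2 ⟨hS.1 hyS, hvy⟩), hyS⟩

lemma IsMaximalIndepSetIn.erase (hS : G.IsMaximalIndepSetIn A S) (hu : u ∈ S) :
    G.IsMaximalIndepSetIn (A \ insert u {x ∈ A | G.Adj u x}) (S.erase u) := by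
  obtain ⟨hSA, hind, hdom⟩ := hS
  refine ⟨fun x hx => ?_, hind.mono (by simp), fun x hx hxS => ?_⟩
  · obtain ⟨hxu, hxS⟩ := mem_erase.1 hx
    simp only [mem_sdiff, mem_insert, mem_filter, not_or, not_and]
    exact ⟨hSA hxS, hxu, fun _ hux => hind hu hxS hxu.symm hux⟩
  · simp only [mem_sdiff, mem_insert, mem_filter, not_or, not_and] at hx
    obtain ⟨hxA, hxu, hnadj⟩ := hx
    obtain ⟨y, hyS, hxy⟩ := hdom x hxA (fun h => hxS (mem_erase.2 ⟨hxu, h⟩))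
    refine ⟨y, mem_erase.2 ⟨?_, hyS⟩, hxy⟩
    rintro rfl
    exact hnadj hxA hxy.symm

lemma card_sdiff_insert_filter_adj (hu : u ∈ A) :
    #(A \ insert u {x ∈ A | G.Adj u x}) + (#{x ∈ A | G.Adj u x} + 1) = #A := by
  have hsub : insert u {x ∈ A | G.Adj u x} ⊆ A := insert_subset hu (filter_subset _ _)
  rw [← card_insert_of_notMem (a := u) (s := {x ∈ A | G.Adj u x}) (by simp),
    card_sdiff_add_card_eq_card hsub]

variable (G)

lemma card_maximalIndepSetsIn_le_sum (hv : v ∈ A) :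
    #(G.maximalIndepSetsIn A) ≤
      ∑ u ∈ insert v {x ∈ A | G.Adj v x}, #{S ∈ G.maximalIndepSetsIn A | u ∈ S} := by
  refine (card_le_card fun S hS => ?_).trans card_biUnion_le
  obtain ⟨u, hu, huS⟩ := (mem_maximalIndepSetsIn.1 hS).exists_mem_insert_filter_adj hv
  exact mem_biUnion.2 ⟨u, hu, mem_filter.2 ⟨hS, huS⟩⟩

lemma card_filter_mem_maximalIndepSetsIn_le (u : W) :
    #{S ∈ G.maximalIndepSetsIn A | u ∈ S} ≤
      #(G.maximalIndepSetsIn (A \ insert u {x ∈ A | G.Adj u x})) := by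
  refine card_le_card_of_injOn (fun S => S.erase u) (fun S hS => ?_) (fun S hS T hT hST => ?_)
  · obtain ⟨hS, huS⟩ := mem_filter.1 hS
    exact mem_maximalIndepSetsIn.2 ((mem_maximalIndepSetsIn.1 hS).erase huS)
  · rw [← insert_erase (mem_filter.1 hS).2, ← insert_erase (mem_filter.1 hT).2]
    exact congrArg (insert u) hST

theorem card_maximalIndepSetsIn_le (A : Finset W) :
    (#(G.maximalIndepSetsIn A) : ℝ) ≤ 3 ^ ((#A : ℝ) / 3) := by
  induction A using Finset.strongInduction with
  | H A ih =>
    rcases A.eq_empty_or_nonempty with rfl | hA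
    · classical
      have : #(G.maximalIndepSetsIn ∅) ≤ 1 := card_filter_le _ _
      simpa using this
    obtain ⟨v, hv, hmin⟩ := exists_min_image A (fun u => #{x ∈ A | G.Adj u x}) hA
    set d := #{x ∈ A | G.Adj v x}
    set N := insert v {x ∈ A | G.Adj v x}
    have hterm : ∀ u ∈ N,
        (#{S ∈ G.maximalIndepSetsIn A | u ∈ S} : ℝ) ≤
          3 ^ ((#A - (d + 1 : ℕ) : ℝ) / 3) := by
      intro u hu
      have huA : u ∈ A := insert_subset hv (filter_subset _ _) hu
      have hcard := card_sdiff_insert_filter_adj (G := G) huA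
      have hdeg := hmin u huA
      calc (#{S ∈ G.maximalIndepSetsIn A | u ∈ S} : ℝ)
          ≤ #(G.maximalIndepSetsIn (A \ insert u {x ∈ A | G.Adj u x})) := by
            exact_mod_cast G.card_filter_mem_maximalIndepSetsIn_le u
        _ ≤ 3 ^ ((#(A \ insert u {x ∈ A | G.Adj u x}) : ℝ) / 3) :=
            ih _ <| sdiff_ssubset (insert_subset huA (filter_subset _ _)) (insert_nonempty _ _)
        _ ≤ 3 ^ ((#A - (d + 1 : ℕ) : ℝ) / 3) := by
            gcongr
            · norm_num
            · rw [le_sub_iff_add_le]; exact_mod_cast (by omega : _ ≤ #A)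
    calc (#(G.maximalIndepSetsIn A) : ℝ)
        ≤ ∑ u ∈ N, (#{S ∈ G.maximalIndepSetsIn A | u ∈ S} : ℝ) := by
          exact_mod_cast G.card_maximalIndepSetsIn_le_sum hv
      _ ≤ ∑ u ∈ N, (3 : ℝ) ^ ((#A - (d + 1 : ℕ) : ℝ) / 3) :=
          sum_le_sum hterm
      _ = (d + 1 : ℕ) * (3 : ℝ) ^ ((#A - (d + 1 : ℕ) : ℝ) / 3) := by
          rw [sum_const, card_insert_of_notMem (by simp), nsmul_eq_mul]
      _ ≤ 3 ^ ((#A : ℝ) / 3) := natCast_mul_three_rpow_sub_le _ _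

end SimpleGraph

theorem moon_moser {W : Type*} [Fintype W] (G : SimpleGraph W) :
    ({S : Set W | (∀ a ∈ S, ∀ b ∈ S, ¬ G.Adj a b) ∧
        ∀ T : Set W, S ⊆ T → (∀ a ∈ T, ∀ b ∈ T, ¬ G.Adj a b) → T = S}.ncard : ℝ)
      ≤ (3 : ℝ) ^ ((Fintype.card W : ℝ) / 3) := by
  classical
  have hcount : {S : Set W | (∀ a ∈ S, ∀ b ∈ S, ¬ G.Adj a b) ∧
      ∀ T : Set W, S ⊆ T → (∀ a ∈ T, ∀ b ∈ T, ¬ G.Adj a b) → T = S}.ncard ≤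
        #(G.maximalIndepSetsIn univ) := by
    rw [← Set.ncard_coe_finset]
    refine Set.ncard_le_ncard_of_injOn (fun S : Set W => S.toFinset) (fun S hS => ?_)
      (fun S _ T _ h => Set.toFinset_inj.1 h) (finite_toSet _)
    exact SimpleGraph.mem_maximalIndepSetsIn.2 (G.isMaximalIndepSetIn_univ_toFinset hS.1 hS.2)
  calc _ ≤ (#(G.maximalIndepSetsIn univ) : ℝ) := by exact_mod_cast hcount
    _ ≤ 3 ^ ((#(univ : Finset W) : ℝ) / 3) := G.card_maximalIndepSetsIn_le univ
    _ = 3 ^ ((Fintype.card W : ℝ) / 3) := by rw [card_univ]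
end

section
/- The 2-CNF formula T(x,y,z) = ⋀_{i=1}^m (x_i ∨ y_i) ∧ (y_i ∨ z_i) ∧ (x_i ∨ z_i) on n = 3m variables has exactly 3^{n/3} prime implicants. -/
variable {V : Type*}

/-!
A restriction `ρ` is an implicant of a 2-CNF without one-variable clauses iff it makes a literal of
every clause true: otherwise, setting the free variables of an uncovered clause against it gives a
falsifying extension. For `Tfml m` this says that in every block `{x_i, y_i, z_i}` at least two
variables are set to `true`, and unfixing a variable only affects its own block. Hence `ρ` is prime
iff on each block it is one of the three block restrictions fixing two variables to `true` and
leaving the third free, and there are `3 ^ m` such choices.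
-/

theorem evalLit_of_extendsR {α : V → Bool} {ρ : V → Option Bool} (h : extendsR α ρ)
    {l : Lit V} {b : Bool} (hl : litVal ρ l = some b) : evalLit α l = b := by
  obtain ⟨a, ha, rfl⟩ := Option.map_eq_some_iff.1 hl
  simp [evalLit, h _ _ ha]

theorem litVal_pos_eq_some_true {ρ : V → Option Bool} {v : V} :
    litVal ρ (v, true) = some true ↔ ρ v = some true := by
  cases h : ρ v with
  | none => simp [litVal, h]
  | some b => cases b <;> simp [litVal, h]

theorem implicant2_iff_forall_litVal {ρ : V → Option Bool} {F : CNF2 V}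
    (hF : ∀ c ∈ F, c.1.1 ≠ c.2.1) :
    implicant2 ρ F ↔ ∀ c ∈ F, litVal ρ c.1 = some true ∨ litVal ρ c.2 = some true := by
  classical
  refine ⟨fun h c hc => ?_, fun h α hα c hc =>
    (h c hc).imp (evalLit_of_extendsR hα) (evalLit_of_extendsR hα)⟩
  let α : V → Bool := fun v => (ρ v).getD (if v = c.1.1 then !c.1.2 else !c.2.2)
  have hα : extendsR α ρ := fun v b hv => by simp [α, hv]
  have hcovered : ∀ l : Lit V, (ρ l.1 = none → α l.1 = !l.2) → evalLit α l = true →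
      litVal ρ l = some true := by
    intro l hfree hl
    cases hv : ρ l.1 with
    | none => simp [evalLit, hfree hv] at hl
    | some b => simp_all [evalLit, litVal, α]
  refine (h α hα c hc).imp (hcovered c.1 fun hv => ?_) (hcovered c.2 fun hv => ?_)
  · simp [α, hv]
  · simp [α, hv, (hF c hc).symm]

theorem ncard_setOf_forall_curry {ι κ β : Type*} [Finite ι] (p : (κ → β) → Prop) :
    {f : ι × κ → β | ∀ i, p (Function.curry f i)}.ncard = Nat.card {r // p r} ^ Nat.card ι := by
  rw [← Nat.card_coe_set_eq, ← Nat.card_fun]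
  exact Nat.card_congr <|
    ((Equiv.curry ι κ β).subtypeEquiv fun _ => Iff.rfl).trans Equiv.subtypePiEquivPi

def IsBlockImplicant (r : Fin 3 → Option Bool) : Prop :=
  (r 0 = some true ∨ r 1 = some true) ∧ (r 1 = some true ∨ r 2 = some true) ∧
    (r 0 = some true ∨ r 2 = some true)

def IsBlockPrime (r : Fin 3 → Option Bool) : Prop :=
  IsBlockImplicant r ∧ ∀ j, r j ≠ none → ¬ IsBlockImplicant (Function.update r j none)

instance : DecidablePred IsBlockImplicant := fun _ => by unfold IsBlockImplicant; infer_instance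

instance : DecidablePred IsBlockPrime := fun _ => by unfold IsBlockPrime; infer_instance

-- The block primes are `fun k => if k = j then none else some true` for `j : Fin 3`.
theorem card_isBlockPrime : Nat.card {r // IsBlockPrime r} = 3 := by
  rw [Nat.card_eq_fintype_card]
  decide

section Tfml

variable {m : ℕ}

theorem forall_mem_Tfml {p : Clause2 (Fin m × Fin 3) → Prop} :
    (∀ c ∈ Tfml m, p c) ↔ ∀ i : Fin m, p (((i, 0), true), ((i, 1), true)) ∧
      p (((i, 1), true), ((i, 2), true)) ∧ p (((i, 0), true), ((i, 2), true)) := by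
  simp only [Tfml, List.forall_mem_flatMap, List.forall_mem_cons, List.not_mem_nil,
    List.mem_finRange, false_imp_iff, implies_true, forall_const, and_true]

theorem implicant2_Tfml_iff {ρ : Fin m × Fin 3 → Option Bool} :
    implicant2 ρ (Tfml m) ↔ ∀ i, IsBlockImplicant (Function.curry ρ i) := by
  have hvars : ∀ c ∈ Tfml m, c.1.1 ≠ c.2.1 := forall_mem_Tfml.2 fun _ => by simp
  rw [implicant2_iff_forall_litVal hvars, forall_mem_Tfml]
  simp only [litVal_pos_eq_some_true]
  rfl

theorem implicant2_unfix_Tfml_iff {ρ : Fin m × Fin 3 → Option Bool}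
    (hρ : implicant2 ρ (Tfml m)) (i : Fin m) (j : Fin 3) :
    implicant2 (unfix ρ (i, j)) (Tfml m) ↔
      IsBlockImplicant (Function.update (Function.curry ρ i) j none) := by
  rw [implicant2_Tfml_iff] at hρ ⊢
  rw [unfix, Function.curry_update, Function.forall_update_iff]
  exact and_iff_left fun i' _ => hρ i'

theorem primeImplicant2_Tfml_iff {ρ : Fin m × Fin 3 → Option Bool} :
    primeImplicant2 ρ (Tfml m) ↔ ∀ i, IsBlockPrime (Function.curry ρ i) := by
  simp only [IsBlockPrime, forall_and, primeImplicant2, Prod.forall, ← implicant2_Tfml_iff]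
  refine and_congr_right fun hρ => ?_
  simp only [implicant2_unfix_Tfml_iff hρ]
  rfl

end Tfml

theorem Tfml_prime_implicant_count (m : ℕ) :
    {ρ : Fin m × Fin 3 → Option Bool | primeImplicant2 ρ (Tfml m)}.ncard = 3 ^ m := by
  simp_rw [primeImplicant2_Tfml_iff]
  rw [ncard_setOf_forall_curry, card_isBlockPrime, Nat.card_fin]
end

section
/- Let F be a 2-CNF and let S be the set of literals that lie on some directed cycle of the implication digraph D(F). Then for any implicant ρ of F, no literal of S corresponds to a variable left free by ρ. -/
variable {V : Type*}

/-! An implicant `ρ` of a loopless 2-CNF propagates along every edge `u → v` of the implication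
digraph: if `ρ` does not make `u` false, it makes `v` true. Otherwise the clause behind the edge
has two literals, neither made true by `ρ`, and since they are not complementary one extension of
`ρ` falsifies both. By transitivity a literal `l` on a cycle is made true by `ρ` unless it is made
false, so its variable is fixed. -/

theorem litVal_eq_some_true {ρ : V → Option Bool} {l : Lit V} :
    litVal ρ l = some true ↔ ρ l.1 = some l.2 := by
  cases h : ρ l.1 <;> simp [litVal, h]

theorem litVal_negLit (ρ : V → Option Bool) (l : Lit V) :
    litVal ρ (negLit l) = (litVal ρ l).map (!·) := by
  cases h : ρ l.1 with
  | none => simp [litVal, negLit, h]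
  | some y => cases y <;> cases l.2 <;> simp [litVal, negLit, h]

theorem exists_extendsR_evalLit_eq_false {ρ : V → Option Bool} {a b : Lit V}
    (hab : b ≠ negLit a) (ha : litVal ρ a ≠ some true) (hb : litVal ρ b ≠ some true) :
    ∃ α, extendsR α ρ ∧ evalLit α a = false ∧ evalLit α b = false := by
  classical
  rw [Ne, litVal_eq_some_true] at ha hb
  refine ⟨fun x => (ρ x).getD (if x = a.1 then !a.2 else !b.2), ?_, ?_, ?_⟩
  · intro v y hv
    simp [hv]
  · cases h : ρ a.1 with
    | none => simp [evalLit, h]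
    | some y =>
      have hy : y ≠ a.2 := fun hy => ha (hy ▸ h)
      simpa [evalLit, h] using hy
  · cases h : ρ b.1 with
    | none =>
      by_cases hba : b.1 = a.1
      · have hb2 : b.2 = a.2 := by
          by_contra hne
          exact hab (Prod.ext hba (Bool.eq_not_iff.mpr hne))
        have ha1 : ρ a.1 = none := hba ▸ h
        simp [evalLit, ha1, hba, hb2]
      · simp [evalLit, h, hba]
    | some y =>
      have hy : y ≠ b.2 := fun hy => hb (hy ▸ h)
      simpa [evalLit, h] using hy

theorem implicant2.litVal_eq_some_true_of_mem {ρ : V → Option Bool} {F : CNF2 V}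
    (hρ : implicant2 ρ F) {c : Clause2 V} (hc : c ∈ F) (hcomp : c.2 ≠ negLit c.1) :
    litVal ρ c.1 = some true ∨ litVal ρ c.2 = some true := by
  by_contra! hfalse
  obtain ⟨α, hα, h1, h2⟩ := exists_extendsR_evalLit_eq_false hcomp hfalse.1 hfalse.2
  rcases hρ α hα c hc with h | h <;> simp_all

theorem implicant2.litVal_eq_some_true_of_edge {ρ : V → Option Bool} {F : CNF2 V}
    (hl : looplessD F) (hρ : implicant2 ρ F) {u v : Lit V} (huv : edge F u v)
    (hu : litVal ρ u ≠ some false) : litVal ρ v = some true := by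
  have hu' : ∀ a, u = negLit a → litVal ρ a ≠ some true := by
    rintro a rfl ha
    simp [litVal_negLit, ha] at hu
  obtain ⟨c, hc, ⟨rfl, rfl⟩ | ⟨rfl, rfl⟩⟩ := huv
  · have hcomp : c.2 ≠ negLit c.1 := fun h => hl _ ⟨c, hc, .inl ⟨rfl, h.symm⟩⟩
    exact (hρ.litVal_eq_some_true_of_mem hc hcomp).resolve_left (hu' _ rfl)
  · have hcomp : c.2 ≠ negLit c.1 := by
      intro h
      refine hl (negLit c.2) ⟨c, hc, .inr ⟨rfl, ?_⟩⟩
      simp [h, negLit]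
    exact (hρ.litVal_eq_some_true_of_mem hc hcomp).resolve_right (hu' _ rfl)

theorem implicant2.litVal_eq_some_true_of_impliesL {ρ : V → Option Bool} {F : CNF2 V}
    (hl : looplessD F) (hρ : implicant2 ρ F) {u v : Lit V} (huv : impliesL F u v)
    (hu : litVal ρ u ≠ some false) : litVal ρ v = some true := by
  induction huv with
  | single he => exact hρ.litVal_eq_some_true_of_edge hl he hu
  | tail _ he ih => exact hρ.litVal_eq_some_true_of_edge hl he (by simp [ih])

theorem cycle_literals_fixed_general (F : CNF2 V) (hl : looplessD F)
    (ρ : V → Option Bool) (h : implicant2 ρ F) :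
    ∀ l : Lit V, onCycle F l → ρ l.1 ≠ none := by
  intro l hcyc hfree
  have hlit : litVal ρ l = none := by simp [litVal, hfree]
  have := h.litVal_eq_some_true_of_impliesL hl hcyc (by simp [hlit])
  simp [hlit] at this

theorem cycle_literals_fixed [DecidableEq V] (F : CNF2 V) (hl : looplessD F)
    (hu : ∀ c ∈ F, c.1 ≠ c.2) (ρ : V → Option Bool) (h : implicant2 ρ F) :
    ∀ l : Lit V, onCycle F l → ρ l.1 ≠ none :=
  cycle_literals_fixed_general F hl ρ h
end

section
/- Let F be a 2-CNF with loopless implication digraph D(F), and let ρ be a restriction inducing a partition of the literals into A_ρ (false literals), B_ρ (true literals), and C_ρ (free literals). Then ρ is an implicant of F if and only if: (1) D(F) has no edge into A_ρ; (2) D(F) has no edge out of B_ρ; and (3) C_ρ is an independent set in D(F). -/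
/-!
A loopless implication digraph rules out tautological clauses `x ∨ ¬x`, so a clause holds under
every extension of `ρ` exactly when `ρ` already makes one of its literals true: otherwise some
extension falsifies both. Reading the clause `a ∨ b` as the edge `¬a → b`, this says that every
edge `u → v` has `u` false or `v` true, and since every literal lies in exactly one of `A_ρ`,
`B_ρ`, `C_ρ`, that is equivalent, edge by edge, to the three conditions.
-/

variable {V : Type*}

section Implicant

variable {ρ : V → Option Bool} {α : V → Bool} {l u v : Lit V}

lemma negLit_negLit (l : Lit V) : negLit (negLit l) = l := by
  simp [negLit]

lemma mem_Aset_iff_negLit_mem_Bset : u ∈ Aset ρ ↔ negLit u ∈ Bset ρ := by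
  obtain ⟨x, b⟩ := u
  cases h : ρ x with
  | none => simp [Aset, Bset, litVal, negLit, h]
  | some c => cases b <;> cases c <;> simp [Aset, Bset, litVal, negLit, h]

lemma evalLit_eq_of_litVal_eq_some (hα : extendsR α ρ) {b : Bool} (h : litVal ρ l = some b) :
    evalLit α l = b := by
  obtain ⟨c, hc, rfl⟩ := Option.map_eq_some_iff.mp h
  rw [evalLit, hα _ _ hc]

lemma extendsR_getD (ρ : V → Option Bool) (σ : V → Bool) :
    extendsR (fun v => (ρ v).getD (σ v)) ρ := by
  intro v b h
  simp [h]

lemma evalLit_getD (ρ : V → Option Bool) (σ : V → Bool) (l : Lit V) :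
    evalLit (fun v => (ρ v).getD (σ v)) l = (litVal ρ l).getD (evalLit σ l) := by
  simp only [evalLit, litVal]
  cases ρ l.1 <;> rfl

lemma exists_extendsR_evalLit_eq_false_s7 {l₁ l₂ : Lit V} (hne : l₁ ≠ negLit l₂)
    (h₁ : l₁ ∉ Bset ρ) (h₂ : l₂ ∉ Bset ρ) :
    ∃ α, extendsR α ρ ∧ evalLit α l₁ = false ∧ evalLit α l₂ = false := by
  classical
  let σ : V → Bool := fun x => if x = l₁.1 then !l₁.2 else !l₂.2
  have hσ₁ : evalLit σ l₁ = false := by simp [σ, evalLit]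
  have hσ₂ : evalLit σ l₂ = false := by
    by_cases hx : l₂.1 = l₁.1
    · have : l₁.2 = l₂.2 := by
        contrapose! hne
        ext
        · exact hx.symm
        · simp [negLit, Bool.eq_not.mpr hne]
      simp [σ, evalLit, hx, this]
    · simp [σ, evalLit, hx]
  have hfalse {l : Lit V} (hl : l ∉ Bset ρ) (hσ : evalLit σ l = false) :
      evalLit (fun v => (ρ v).getD (σ v)) l = false := by
    rw [evalLit_getD, hσ]
    cases h : litVal ρ l with
    | none => rfl
    | some b => simpa [Bset, h] using hl
  exact ⟨_, extendsR_getD ρ σ, hfalse h₁ hσ₁, hfalse h₂ hσ₂⟩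

lemma forall_extendsR_clause_iff {c : Clause2 V} (hc : c.1 ≠ negLit c.2) :
    (∀ α, extendsR α ρ → evalLit α c.1 = true ∨ evalLit α c.2 = true) ↔
      c.1 ∈ Bset ρ ∨ c.2 ∈ Bset ρ := by
  constructor
  · intro h
    by_contra! hB
    obtain ⟨α, hα, h₁, h₂⟩ := exists_extendsR_evalLit_eq_false_s7 hc hB.1 hB.2
    simpa [h₁, h₂] using h α hα
  · rintro (h | h) α hα
    · exact .inl (evalLit_eq_of_litVal_eq_some hα h)
    · exact .inr (evalLit_eq_of_litVal_eq_some hα h)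

lemma implicant2_iff_forall_mem_Bset {F : CNF2 V} (hF : ∀ c ∈ F, c.1 ≠ negLit c.2) :
    implicant2 ρ F ↔ ∀ c ∈ F, c.1 ∈ Bset ρ ∨ c.2 ∈ Bset ρ := by
  simp only [implicant2, sat2]
  constructor
  · exact fun h c hc => (forall_extendsR_clause_iff (hF c hc)).mp fun α hα => h α hα c hc
  · exact fun h α hα c hc => (forall_extendsR_clause_iff (hF c hc)).mpr (h c hc) α hα

lemma looplessD.fst_ne_negLit_snd {F : CNF2 V} (hl : looplessD F) {c : Clause2 V} (hc : c ∈ F) :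
    c.1 ≠ negLit c.2 := by
  intro h
  exact hl c.2 ⟨c, hc, .inl ⟨by rw [h, negLit_negLit], rfl⟩⟩

lemma forall_clause_iff_forall_edge (F : CNF2 V) (P : Lit V → Prop) :
    (∀ c ∈ F, P c.1 ∨ P c.2) ↔ ∀ u v, edge F u v → P (negLit u) ∨ P v := by
  constructor
  · rintro h u v ⟨c, hc, ⟨rfl, rfl⟩ | ⟨rfl, rfl⟩⟩ <;> rw [negLit_negLit]
    · exact h c hc
    · exact (h c hc).symm
  · intro h c hc
    simpa [negLit_negLit] using h _ _ ⟨c, hc, .inl ⟨rfl, rfl⟩⟩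

lemma eq_some_false_or_eq_some_true_iff (x y : Option Bool) :
    (x = some false ∨ y = some true) ↔
      (y = some false → x = some false) ∧ (x = some true → y = some true) ∧
        ¬(x = none ∧ y = none) := by
  revert x y
  decide

lemma mem_Aset_or_mem_Bset_iff :
    u ∈ Aset ρ ∨ v ∈ Bset ρ ↔
      (v ∈ Aset ρ → u ∈ Aset ρ) ∧ (u ∈ Bset ρ → v ∈ Bset ρ) ∧
        ¬(u ∈ Cset ρ ∧ v ∈ Cset ρ) :=
  eq_some_false_or_eq_some_true_iff (litVal ρ u) (litVal ρ v)

end Implicant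

theorem implicant_characterization_general (F : CNF2 V) (hl : looplessD F)
    (ρ : V → Option Bool) :
    implicant2 ρ F ↔
      ((∀ u v, edge F u v → v ∈ Aset ρ → u ∈ Aset ρ) ∧
       (∀ u v, edge F u v → u ∈ Bset ρ → v ∈ Bset ρ) ∧
       (∀ u ∈ Cset ρ, ∀ v ∈ Cset ρ, ¬ edge F u v)) := by
  rw [implicant2_iff_forall_mem_Bset fun c hc => hl.fst_ne_negLit_snd hc,
    forall_clause_iff_forall_edge F (· ∈ Bset ρ)]
  simp only [← mem_Aset_iff_negLit_mem_Bset, mem_Aset_or_mem_Bset_iff]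
  constructor
  · intro h
    exact ⟨fun u v he => (h u v he).1, fun u v he => (h u v he).2.1,
      fun u hu v hv he => (h u v he).2.2 ⟨hu, hv⟩⟩
  · rintro ⟨hA, hB, hC⟩ u v he
    exact ⟨hA u v he, hB u v he, fun ⟨hu, hv⟩ => hC u hu v hv he⟩

theorem implicant_characterization [DecidableEq V] (F : CNF2 V) (hl : looplessD F)
    (ρ : V → Option Bool) :
    implicant2 ρ F ↔
      ((∀ u v, edge F u v → v ∈ Aset ρ → u ∈ Aset ρ) ∧
       (∀ u v, edge F u v → u ∈ Bset ρ → v ∈ Bset ρ) ∧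
       (∀ u ∈ Cset ρ, ∀ v ∈ Cset ρ, ¬ edge F u v)) :=
  implicant_characterization_general F hl ρ
end

section
/- Let t be the number of distinct variables of a 2-CNF F that appear in some directed cycle of D(F), where D(F) is loopless and every such cycle contains at least 2 distinct variables. Then the number of ways to assign truth values to these t variables consistently with all cycle constraints (all literals on a common cycle take equal value) is at most 2^{t/2}. -/
variable {V : Type*}

/-!
Mutual implication in D(F) is compatible with negation (D(F) is skew-symmetric), so "some literal of x
and some literal of y lie on a common cycle" is an equivalence relation on the t cycle variables. A
consistent assignment is determined by its values on one representative per class, giving at most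
2^(#classes) assignments, and every class contains at least two variables, so #classes ≤ t/2.
-/

open Finset in
theorem Setoid.two_mul_card_quotient_le {α : Type*} [Finite α] (s : Setoid α)
    (h : ∀ a, ∃ b, s b a ∧ b ≠ a) : 2 * Nat.card (Quotient s) ≤ Nat.card α := by
  classical
  have := Fintype.ofFinite α
  have hfiber (q : Quotient s) : 2 ≤ #{a : α | Quotient.mk s a = q} := by
    obtain ⟨b, hb, hne⟩ := h q.out
    exact Finset.one_lt_card.2 ⟨q.out, by simp, b, by simpa using Quotient.sound hb, hne.symm⟩
  calc 2 * Nat.card (Quotient s) = ∑ _ : Quotient s, 2 := by simp [mul_comm]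
    _ ≤ ∑ q, #{a : α | Quotient.mk s a = q} := Finset.sum_le_sum fun q _ => hfiber q
    _ = Nat.card α := by
      rw [Nat.card_eq_fintype_card, ← Finset.card_univ,
        Finset.card_eq_sum_card_fiberwise (f := Quotient.mk s) (t := univ)
          fun _ _ => mem_coe.2 (mem_univ _)]

theorem Setoid.ncard_le_pow_card_quotient {α β : Type*} [Finite α] [Fintype β] (s : Setoid α)
    {I : Set (α → β)}
    (hI : ∀ g₁ ∈ I, ∀ g₂ ∈ I, ∀ a b, s a b → g₁ b = g₂ b → g₁ a = g₂ a) :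
    I.ncard ≤ Fintype.card β ^ Nat.card (Quotient s) := by
  have hinj : I.InjOn fun g (q : Quotient s) => g q.out := fun g₁ h₁ g₂ h₂ h =>
    funext fun a => hI g₁ h₁ g₂ h₂ a _ (s.symm (Quotient.mk_out a)) (congrFun h ⟦a⟧)
  rw [← hinj.ncard_image, ← Nat.card_eq_fintype_card, ← Nat.card_fun]
  exact Set.ncard_le_card _

theorem natCast_le_two_rpow_half {k m t : ℕ} (hk : k ≤ 2 ^ m) (hm : 2 * m ≤ t) :
    (k : ℝ) ≤ 2 ^ ((t : ℝ) / 2) := by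
  calc (k : ℝ) ≤ 2 ^ (m : ℝ) := by rw [Real.rpow_natCast]; exact_mod_cast hk
    _ ≤ 2 ^ ((t : ℝ) / 2) := by
      gcongr
      · norm_num
      · rw [le_div_iff₀ two_pos]; exact_mod_cast (by omega : m * 2 ≤ t)

section ImplicationDigraph

variable {F : CNF2 V}

theorem edge_negLit {u v : Lit V} (h : edge F u v) : edge F (negLit v) (negLit u) := by
  obtain ⟨c, hc, ⟨rfl, rfl⟩ | ⟨rfl, rfl⟩⟩ := h
  · exact ⟨c, hc, Or.inr ⟨rfl, by simp [negLit]⟩⟩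
  · exact ⟨c, hc, Or.inl ⟨rfl, by simp [negLit]⟩⟩

theorem impliesL_negLit {u v : Lit V} (h : impliesL F u v) :
    impliesL F (negLit v) (negLit u) := by
  induction h with
  | single h => exact .single (edge_negLit h)
  | tail _ h ih => exact .head (edge_negLit h) ih

variable (F) in
def IsCycleConsistent (α : V → Bool) : Prop :=
  ∀ u v, impliesL F u v → impliesL F v u → evalLit α u = evalLit α v

variable (F) in
def cycleVarSetoid : Setoid {x : V // ∃ b, onCycle F (x, b)} where
  r x y := ∃ p q, impliesL F (x.1, p) (y.1, q) ∧ impliesL F (y.1, q) (x.1, p)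
  iseqv := by
    refine ⟨fun ⟨x, b, hb⟩ => ⟨b, b, hb, hb⟩, fun ⟨p, q, h₁, h₂⟩ => ⟨q, p, h₂, h₁⟩, ?_⟩
    rintro x y z ⟨p, q, hxy, hyx⟩ ⟨q', r, hyz, hzy⟩
    obtain rfl | rfl : q' = q ∨ q' = !q := by cases q <;> cases q' <;> simp
    · exact ⟨p, r, hxy.trans hyz, hzy.trans hyx⟩
    · exact ⟨!p, r, (impliesL_negLit hyx).trans hyz, hzy.trans (impliesL_negLit hxy)⟩

theorem exists_ne_cycleVarSetoid
    (h2 : ∀ u : Lit V, onCycle F u → ∃ v : Lit V, impliesL F u v ∧ impliesL F v u ∧ v.1 ≠ u.1)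
    (x : {x : V // ∃ b, onCycle F (x, b)}) : ∃ y, cycleVarSetoid F y x ∧ y ≠ x := by
  obtain ⟨b, hb⟩ := x.2
  obtain ⟨v, hxv, hvx, hne⟩ := h2 _ hb
  exact ⟨⟨v.1, v.2, hvx.trans hxv⟩, ⟨v.2, b, hvx, hxv⟩, fun h => hne (congrArg Subtype.val h)⟩

theorem eq_of_cycleVarSetoid {α β : V → Bool}
    (hα : IsCycleConsistent F α) (hβ : IsCycleConsistent F β)
    {x y : {x : V // ∃ b, onCycle F (x, b)}} (hxy : cycleVarSetoid F x y)
    (h : α y.1 = β y.1) : α x.1 = β x.1 := by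
  obtain ⟨p, q, hxy, hyx⟩ := hxy
  have hval : evalLit α (x.1, p) = evalLit β (x.1, p) := by
    rw [hα _ _ hxy hyx, hβ _ _ hxy hyx, evalLit, evalLit, h]
  revert hval
  simp only [evalLit]
  cases α x.1 <;> cases β x.1 <;> cases p <;> simp

end ImplicationDigraph

theorem cycle_assignment_count_general {n : ℕ} (F : CNF2 (Fin n))
    (h2 : ∀ u : Lit (Fin n), onCycle F u →
      ∃ v : Lit (Fin n), impliesL F u v ∧ impliesL F v u ∧ v.1 ≠ u.1) :
    (((fun (α : Fin n → Bool) (x : {x : Fin n // ∃ b, onCycle F (x, b)}) => α x.1) ''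
        {α : Fin n → Bool |
          ∀ u v : Lit (Fin n), impliesL F u v → impliesL F v u →
            evalLit α u = evalLit α v}).ncard : ℝ)
      ≤ (2 : ℝ) ^ (({x : Fin n | ∃ b, onCycle F (x, b)}.ncard : ℝ) / 2) := by
  refine natCast_le_two_rpow_half ((cycleVarSetoid F).ncard_le_pow_card_quotient ?_)
    (((cycleVarSetoid F).two_mul_card_quotient_le (exists_ne_cycleVarSetoid h2)).trans_eq
      (Nat.card_coe_set_eq _))
  rintro _ ⟨α, hα, rfl⟩ _ ⟨β, hβ, rfl⟩ x y hxy h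
  exact eq_of_cycleVarSetoid hα hβ hxy h

theorem cycle_assignment_count {n : ℕ} (F : CNF2 (Fin n)) (hl : looplessD F)
    (h2 : ∀ u : Lit (Fin n), onCycle F u →
      ∃ v : Lit (Fin n), impliesL F u v ∧ impliesL F v u ∧ v.1 ≠ u.1) :
    (((fun (α : Fin n → Bool) (x : {x : Fin n // ∃ b, onCycle F (x, b)}) => α x.1) ''
        {α : Fin n → Bool |
          ∀ u v : Lit (Fin n), impliesL F u v → impliesL F v u →
            evalLit α u = evalLit α v}).ncard : ℝ)
      ≤ (2 : ℝ) ^ (({x : Fin n | ∃ b, onCycle F (x, b)}.ncard : ℝ) / 2) :=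
  cycle_assignment_count_general F h2
end

section
/- For all sufficiently large k and all n ≥ k divisible by k, m(n,k) ≥ 3^{(1 - O(log k / k))n}, i.e., there exists a k-CNF on n variables with at least (c·3^k/k)^{n/k} prime implicants for some constant c > 0. -/
variable {V : Type*}

/-!
On each of `n / k` disjoint blocks of `3t` variables, `t = k / 3`, take the canonical CNF (one
clause of length `3t` per falsifying assignment) of the threshold function "at least `t` ones and
at least `t` zeros", i.e. the Chandra–Markowsky function. Fixing `t` variables of a block to `1`
and `t` others to `0` is a prime implicant of that function: it forces the threshold, and once
one of the fixed variables is freed, the free variables can all be set to its opposite value.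
Prime implicants of a conjunction on disjoint blocks combine blockwise, so the formula has at
least `(C(3t,t) C(2t,t))^(n/k)` prime implicants, and the trinomial coefficient
`C(3t,t) C(2t,t) = (3t)!/(t!)^3` is at least `27^t/(5t) ≥ 3^k/(45k)`.
-/

open Finset Function

noncomputable section CanonicalCNF

variable {κ ι : Type*} [Fintype κ]

def forbiddenClause (f : κ → V) (s : κ → Bool) : List (Lit V) :=
  univ.toList.map fun i => (f i, !s i)

def canonicalCNF [DecidableEq κ] (f : κ → V) (g : (κ → Bool) → Bool) : CNF V :=
  (univ.filter fun s => g s = false).toList.map (forbiddenClause f)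

lemma satisfies_forbiddenClause_iff (α : V → Bool) (f : κ → V) (s : κ → Bool) :
    (∃ l ∈ forbiddenClause f s, evalLit α l = true) ↔ α ∘ f ≠ s := by
  simp only [forbiddenClause, List.mem_map, mem_toList, mem_univ, true_and, ne_eq, funext_iff,
    comp_apply, not_forall]
  constructor
  · rintro ⟨_, ⟨i, rfl⟩, hi⟩
    exact ⟨i, by simp_all [evalLit]⟩
  · rintro ⟨i, hi⟩
    exact ⟨_, ⟨i, rfl⟩, by cases h : s i <;> simp_all [evalLit]⟩

lemma satCNF_canonicalCNF_iff [DecidableEq κ] (α : V → Bool) (f : κ → V)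
    (g : (κ → Bool) → Bool) :
    satCNF α (canonicalCNF f g) ↔ g (α ∘ f) = true := by
  simp only [satCNF, canonicalCNF, List.forall_mem_map, mem_toList, mem_filter, mem_univ,
    true_and, satisfies_forbiddenClause_iff]
  constructor
  · intro h
    by_contra hg
    exact h _ (by simpa using hg) rfl
  · rintro hg s hs rfl
    simp [hg] at hs

def blockwise [Fintype ι] (h : (κ → Bool) → Bool) (s : ι × κ → Bool) : Bool :=
  decide (∀ j, h (fun i => s (j, i)) = true)

def blockCNF [DecidableEq κ] [Fintype ι] (f : ι × κ → V) (h : (κ → Bool) → Bool) :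
    CNF V :=
  univ.toList.flatMap fun j => canonicalCNF (fun i => f (j, i)) h

lemma satCNF_blockCNF_iff [DecidableEq κ] [Fintype ι] (α : V → Bool) (f : ι × κ → V)
    (h : (κ → Bool) → Bool) :
    satCNF α (blockCNF f h) ↔ blockwise h (α ∘ f) = true := by
  have hblock (j : ι) : satCNF α (canonicalCNF (fun i => f (j, i)) h) ↔
      h (fun i => α (f (j, i))) = true :=
    satCNF_canonicalCNF_iff α _ h
  simp only [blockwise, comp_apply, decide_eq_true_eq, ← hblock, satCNF, blockCNF,
    List.mem_flatMap, mem_toList, mem_univ, true_and]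
  exact ⟨fun H j C hC => H C ⟨j, hC⟩, fun H C ⟨j, hC⟩ => H j C hC⟩

lemma kCNF_blockCNF [DecidableEq κ] [Fintype ι] (f : ι × κ → V)
    (h : (κ → Bool) → Bool) :
    kCNF (Fintype.card κ) (blockCNF f h) := by
  simp only [kCNF, blockCNF, canonicalCNF, List.mem_flatMap, List.mem_map]
  rintro _ ⟨j, -, s, -, rfl⟩
  simp [forbiddenClause]

end CanonicalCNF

section Extension

variable {W : Type*} {f : W → V}

lemma extendsR_extend_iff (hf : Injective f) (α : V → Bool) (σ : W → Option Bool) :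
    extendsR α (extend f σ fun _ => none) ↔ extendsR (α ∘ f) σ := by
  constructor
  · intro h w b hw
    exact h (f w) b (by rwa [hf.extend_apply])
  · intro h v b hv
    by_cases hvf : ∃ w, f w = v
    · obtain ⟨w, rfl⟩ := hvf
      exact h w b (by rwa [hf.extend_apply] at hv)
    · simp [extend_apply' _ _ _ hvf] at hv

lemma exists_eq_of_extend_ne_none {σ : W → Option Bool} {v : V}
    (hv : extend f σ (fun _ => none) v ≠ none) : ∃ w, f w = v := by
  by_contra hvf
  exact hv (extend_apply' _ _ _ hvf)

lemma unfix_extend [DecidableEq V] [DecidableEq W] (hf : Injective f) (σ : W → Option Bool)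
    (w : W) : unfix (extend f σ fun _ => none) (f w) = extend f (unfix σ w) fun _ => none := by
  funext v
  by_cases hvf : ∃ w', f w' = v
  · obtain ⟨w', rfl⟩ := hvf
    simp only [unfix, hf.extend_apply, update_apply, hf.eq_iff]
  · simp [unfix, extend_apply' _ _ _ hvf, update_apply]

variable {F : CNF V} {g : (W → Bool) → Bool}

lemma implicantC_extend_iff (hf : Injective f) (hF : ∀ α, satCNF α F ↔ g (α ∘ f) = true)
    (σ : W → Option Bool) : implicantC (extend f σ fun _ => none) F ↔ implicantF σ g := by
  simp only [implicantC, implicantF, hF, extendsR_extend_iff hf]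
  refine ⟨fun h s hs => ?_, fun h α hα => h _ hα⟩
  have hcomp : extend f s (fun _ => false) ∘ f = s := extend_comp hf _ _
  rw [← hcomp] at hs ⊢
  exact h _ hs

lemma primeImplicantC_extend_iff [DecidableEq V] [DecidableEq W] (hf : Injective f)
    (hF : ∀ α, satCNF α F ↔ g (α ∘ f) = true) (σ : W → Option Bool) :
    primeImplicantC (extend f σ fun _ => none) F ↔ primeImplicantF σ g := by
  simp only [primeImplicantC, primeImplicantF, implicantC_extend_iff hf hF]
  refine and_congr_right fun _ => ⟨fun h w hw => ?_, fun h v hv => ?_⟩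
  · rw [← implicantC_extend_iff hf hF, ← unfix_extend hf]
    exact h (f w) (by rwa [hf.extend_apply])
  · obtain ⟨w, rfl⟩ := exists_eq_of_extend_ne_none hv
    rw [unfix_extend hf, implicantC_extend_iff hf hF]
    exact h w (by rwa [hf.extend_apply] at hv)

end Extension

section Blockwise

variable {ι κ : Type*} [Fintype ι] [DecidableEq ι] [DecidableEq κ]

lemma primeImplicantF_blockwise {h : (κ → Bool) → Bool} {τ : ι → κ → Option Bool}
    (hτ : ∀ j, primeImplicantF (τ j) h) : primeImplicantF (uncurry τ) (blockwise h) := by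
  refine ⟨fun α hα => ?_, ?_⟩
  · simp only [blockwise, decide_eq_true_eq]
    exact fun j => (hτ j).1 _ fun i b hb => hα (j, i) b hb
  · rintro ⟨j, i₀⟩ hne himp
    obtain ⟨s, hs, hfalse⟩ : ∃ s, extendsR s (unfix (τ j) i₀) ∧ h s ≠ true := by
      simpa [implicantF] using (hτ j).2 i₀ hne
    let α : ι × κ → Bool := fun x => if x.1 = j then s x.2 else (τ x.1 x.2).getD false
    have hα : extendsR α (unfix (uncurry τ) (j, i₀)) := by
      rintro ⟨j', i⟩ b hb
      by_cases hj : j' = j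
      · subst hj
        simpa [α] using hs i b (by simpa [unfix, update_apply] using hb)
      · simp_all [α, unfix]
    have hαj := himp α hα
    simp only [blockwise, decide_eq_true_eq] at hαj
    exact hfalse (by simpa [α] using hαj j)

lemma pow_ncard_primeImplicantF_le_ncard_primeImplicantC [Fintype κ] [DecidableEq V] [Finite V]
    {f : ι × κ → V} (hf : Injective f) (h : (κ → Bool) → Bool) :
    {τ : κ → Option Bool | primeImplicantF τ h}.ncard ^ Fintype.card ι ≤
      {ρ : V → Option Bool | primeImplicantC ρ (blockCNF f h)}.ncard := by
  classical
  set S := {τ : κ → Option Bool | primeImplicantF τ h}.toFinset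
  have hcard : #(Fintype.piFinset fun _ : ι => S) = #S ^ Fintype.card ι := by simp
  rw [Set.ncard_eq_toFinset_card', ← hcard, ← Set.ncard_coe_finset]
  refine Set.ncard_le_ncard_of_injOn (fun T => extend f (uncurry T) fun _ => none)
    (fun T hT => ?_) (fun T _ T' _ hTT' => ?_) (Set.toFinite _)
  · simp only [Finset.mem_coe, Fintype.mem_piFinset, Set.mem_toFinset, S] at hT
    exact (primeImplicantC_extend_iff hf (fun α => satCNF_blockCNF_iff α f h) _).2
      (primeImplicantF_blockwise hT)
  · have := congrArg (· ∘ f) hTT'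
    simp only [extend_comp hf] at this
    exact uncurry_injective this

end Blockwise

section Threshold

variable {κ : Type*} [Fintype κ] [DecidableEq κ]

def threshold (a b : ℕ) (s : κ → Bool) : Bool :=
  decide (a ≤ #{i | s i = true} ∧ b ≤ #{i | s i = false})

def partialOfFinsets (A B : Finset κ) (i : κ) : Option Bool :=
  if i ∈ A then some true else if i ∈ B then some false else none

lemma filter_partialOfFinsets_eq_some_true (A B : Finset κ) :
    ({i | partialOfFinsets A B i = some true} : Finset κ) = A := by
  ext i
  rw [mem_filter_univ, partialOfFinsets]
  split_ifs <;> simp_all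

lemma filter_partialOfFinsets_eq_some_false {A B : Finset κ} (hAB : Disjoint A B) :
    ({i | partialOfFinsets A B i = some false} : Finset κ) = B := by
  ext i
  rw [mem_filter_univ, partialOfFinsets]
  split_ifs with hA hB
  · simp [disjoint_left.1 hAB hA]
  · simp [hB]
  · simp [hB]

lemma filter_getD_unfix_subset (τ : κ → Option Bool) (v : κ) (c : Bool) :
    ({i | (unfix τ v i).getD (!c) = c} : Finset κ) ⊆
      ({i | τ i = some c} : Finset κ).erase v := by
  intro i hi
  simp only [mem_filter, mem_univ, true_and, mem_erase] at hi ⊢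
  by_cases hiv : i = v
  · subst hiv
    cases c <;> simp [unfix] at hi
  · cases hτ : τ i <;> cases c <;> simp_all [unfix]

lemma primeImplicantF_threshold {A B : Finset κ} (hAB : Disjoint A B) :
    primeImplicantF (partialOfFinsets A B) (threshold #A #B) := by
  refine ⟨fun s hs => ?_, fun v hv himp => ?_⟩
  · have hA : A ⊆ ({i | s i = true} : Finset κ) := fun i hi => by
      simpa using hs i true (by simp [partialOfFinsets, hi])
    have hB : B ⊆ ({i | s i = false} : Finset κ) := fun i hi => by
      simpa using hs i false (by simp [partialOfFinsets, hi, disjoint_right.1 hAB hi])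
    simp [threshold, card_le_card hA, card_le_card hB]
  · obtain ⟨c, hc⟩ := Option.ne_none_iff_exists'.1 hv
    let s := fun i => (unfix (partialOfFinsets A B) v i).getD (!c)
    have hs : extendsR s (unfix (partialOfFinsets A B) v) := fun i b hb => by simp [s, hb]
    have hlt : #{i | s i = c} < #({i | partialOfFinsets A B i = some c} : Finset κ) :=
      (card_le_card (filter_getD_unfix_subset _ v c)).trans_lt (card_erase_lt_of_mem (by simpa))
    have hsat := himp s hs
    simp only [threshold, decide_eq_true_eq] at hsat
    cases c
    · rw [filter_partialOfFinsets_eq_some_false hAB] at hlt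
      omega
    · rw [filter_partialOfFinsets_eq_some_true] at hlt
      omega

lemma choose_mul_choose_le_ncard_primeImplicantF_threshold (a b : ℕ) :
    (Fintype.card κ).choose a * (Fintype.card κ - a).choose b ≤
      {τ : κ → Option Bool | primeImplicantF τ (threshold a b)}.ncard := by
  let D := (powersetCard a (univ : Finset κ)).sigma fun A => powersetCard b Aᶜ
  have hD : #D = (Fintype.card κ).choose a * (Fintype.card κ - a).choose b := by
    rw [card_sigma, sum_congr rfl fun A hA => by
      rw [card_powersetCard, card_compl, (mem_powersetCard.1 hA).2], sum_const,
      card_powersetCard, card_univ, smul_eq_mul]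
  have hmemD (x : Σ _ : Finset κ, Finset κ) :
      x ∈ (D : Set _) ↔ #x.1 = a ∧ Disjoint x.1 x.2 ∧ #x.2 = b := by
    simp [D, subset_compl_iff_disjoint_left]
  rw [← hD, ← Set.ncard_coe_finset]
  refine Set.ncard_le_ncard_of_injOn (fun x => partialOfFinsets x.1 x.2)
    (fun x hx => ?_) (fun x hx y hy hxy => ?_) (Set.toFinite _)
  · obtain ⟨rfl, hdisj, rfl⟩ := (hmemD x).1 hx
    exact primeImplicantF_threshold hdisj
  · replace hxy : partialOfFinsets x.1 x.2 = partialOfFinsets y.1 y.2 := hxy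
    have hfst : x.1 = y.1 := by
      rw [← filter_partialOfFinsets_eq_some_true x.1 x.2, hxy,
        filter_partialOfFinsets_eq_some_true]
    have hsnd : x.2 = y.2 := by
      rw [← filter_partialOfFinsets_eq_some_false ((hmemD x).1 hx).2.1, hxy,
        filter_partialOfFinsets_eq_some_false ((hmemD y).1 hy).2.1]
    exact Sigma.ext hfst (heq_of_eq hsnd)

end Threshold

section Trinomial

open Nat

lemma choose_mul_choose_mul_factorial_pow (t : ℕ) :
    (3 * t).choose t * (2 * t).choose t * t ! ^ 3 = (3 * t)! := by
  have h3 := choose_mul_factorial_mul_factorial (show t ≤ 3 * t by omega)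
  have h2 := choose_mul_factorial_mul_factorial (show t ≤ 2 * t by omega)
  rw [show 3 * t - t = 2 * t by omega] at h3
  rw [show 2 * t - t = t by omega] at h2
  rw [← h3, ← h2]
  ring

lemma sq_mul_choose_mul_choose_succ (t : ℕ) :
    (t + 1) ^ 2 * ((3 * (t + 1)).choose (t + 1) * (2 * (t + 1)).choose (t + 1)) =
      3 * (3 * t + 2) * (3 * t + 1) * ((3 * t).choose t * (2 * t).choose t) := by
  apply Nat.eq_of_mul_eq_mul_right (show 0 < (t + 1) * t ! ^ 3 by positivity)
  have hfac : (3 * (t + 1))! = (3 * t + 3) * (3 * t + 2) * (3 * t + 1) * (3 * t)! := by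
    rw [show 3 * (t + 1) = 3 * t + 2 + 1 by ring, factorial_succ, factorial_succ, factorial_succ]
    ring
  have hsucc := choose_mul_choose_mul_factorial_pow (t + 1)
  rw [hfac, factorial_succ, ← choose_mul_choose_mul_factorial_pow t] at hsucc
  linear_combination hsucc

lemma twentySeven_pow_le_mul_choose_mul_choose {t : ℕ} (ht : 1 ≤ t) :
    27 ^ t ≤ 5 * t * ((3 * t).choose t * (2 * t).choose t) := by
  induction t, ht using Nat.le_induction with
  | base => decide
  | succ t ht ih =>
    set M := (3 * t).choose t * (2 * t).choose t
    refine Nat.le_of_mul_le_mul_right ?_ (show 0 < (t + 1) ^ 2 by positivity)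
    calc 27 ^ (t + 1) * (t + 1) ^ 2 ≤ 27 * (5 * t * M) * (t + 1) ^ 2 := by
          rw [_root_.pow_succ']; gcongr
      _ ≤ 15 * (t + 1) * (3 * t + 2) * (3 * t + 1) * M := by
          have : 9 * t * (t + 1) ≤ (3 * t + 2) * (3 * t + 1) := by nlinarith
          nlinarith
      _ = 5 * (t + 1) * ((t + 1) ^ 2 *
            ((3 * (t + 1)).choose (t + 1) * (2 * (t + 1)).choose (t + 1))) := by
          rw [sq_mul_choose_mul_choose_succ]; ring
      _ = _ := by ring

lemma three_pow_le_mul_choose_mul_choose {k : ℕ} (hk : 3 ≤ k) :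
    3 ^ k ≤ 45 * k * ((3 * (k / 3)).choose (k / 3) * (2 * (k / 3)).choose (k / 3)) := by
  set t := k / 3
  calc 3 ^ k ≤ 3 ^ (3 * t + 2) := Nat.pow_le_pow_right (by norm_num) (by omega)
    _ = 9 * 27 ^ t := by rw [pow_add, pow_mul]; ring
    _ ≤ 9 * (5 * t * ((3 * t).choose t * (2 * t).choose t)) :=
        Nat.mul_le_mul_left _ (twentySeven_pow_le_mul_choose_mul_choose (by omega))
    _ ≤ 45 * k * ((3 * t).choose t * (2 * t).choose t) := by
        rw [← mul_assoc]
        exact Nat.mul_le_mul_right _ (by omega)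

end Trinomial

theorem kcnf_lower_bound :
    ∃ k₀ : ℕ, ∃ c : ℝ, 0 < c ∧ ∀ k, k₀ ≤ k → ∀ n, k ≤ n → k ∣ n →
      ∃ F : CNF (Fin n), kCNF k F ∧
        (c * 3 ^ k / (k : ℝ)) ^ (n / k) ≤
          ({ρ : Fin n → Option Bool | primeImplicantC ρ F}.ncard : ℝ) := by
  refine ⟨3, 1 / 45, by norm_num, fun k hk n _ _ => ?_⟩
  set t := k / 3
  set q := n / k
  have hqt : q * (3 * t) ≤ n :=
    (Nat.mul_le_mul_left q (Nat.mul_div_le k 3)).trans (Nat.div_mul_le_self n k)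
  let emb : Fin q × Fin (3 * t) ↪ Fin n := finProdFinEquiv.toEmbedding.trans (Fin.castLEEmb hqt)
  have hclause : Fintype.card (Fin (3 * t)) ≤ k := by
    rw [Fintype.card_fin]; exact Nat.mul_div_le k 3
  refine ⟨blockCNF emb (threshold t t),
    fun C hC => (kCNF_blockCNF emb _ C hC).trans hclause, ?_⟩
  set M := (3 * t).choose t * (2 * t).choose t
  have hblock :
      M ≤ {τ : Fin (3 * t) → Option Bool | primeImplicantF τ (threshold t t)}.ncard := by
    simpa [show 3 * t - t = 2 * t by omega] using
      choose_mul_choose_le_ncard_primeImplicantF_threshold (κ := Fin (3 * t)) t t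
  have hblocks := pow_ncard_primeImplicantF_le_ncard_primeImplicantC emb.injective (threshold t t)
  rw [Fintype.card_fin] at hblocks
  have hbase : 1 / 45 * 3 ^ k / (k : ℝ) ≤ M := by
    rw [div_le_iff₀ (by positivity)]
    have h3k : (3 : ℝ) ^ k ≤ 45 * k * M := by
      exact_mod_cast three_pow_le_mul_choose_mul_choose hk
    linarith
  calc (1 / 45 * 3 ^ k / (k : ℝ)) ^ q
      ≤ (M : ℝ) ^ q := pow_le_pow_left₀ (by positivity) hbase q
    _ ≤ _ := by exact_mod_cast (Nat.pow_le_pow_left hblock q).trans hblocks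
end

section
/- If F = F₁ ∧ F₂ where F₁ and F₂ are Boolean functions over disjoint variable sets, then the prime implicants of F are exactly the concatenations of a prime implicant of F₁ with a prime implicant of F₂; in particular the number of prime implicants of F equals the product of the numbers for F₁ and F₂. -/
variable {V : Type*}

/-!
A restriction of `V₁ ⊕ V₂` is the same thing as a pair of restrictions of `V₁` and `V₂`, and so
is an assignment. Since `F` reads its two halves from disjoint variables, and an extension of one
half of `ρ` can be completed to an extension of `ρ` arbitrarily on the other half, `ρ` is an
implicant of `F` exactly when each half of `ρ` is an implicant of its `Fᵢ`. Unfixing a variable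
changes only one half, so minimality splits in the same way. The bijection
`ρ ↦ (ρ ∘ inl, ρ ∘ inr)` then matches the prime implicants of `F` with pairs of prime implicants.
-/

open Function

section Restriction

variable {V W : Type*}

theorem extendsR.comp {α : V → Bool} {ρ : V → Option Bool} (h : extendsR α ρ) (e : W → V) :
    extendsR (fun w => α (e w)) (fun w => ρ (e w)) :=
  fun w b hw => h (e w) b hw

theorem extendsR_extend {e : W → V} (he : Injective e) {ρ : V → Option Bool} {β : W → Bool}
    (hβ : extendsR β (fun w => ρ (e w))) :
    extendsR (extend e β fun v => (ρ v).getD false) ρ := by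
  intro v b hv
  by_cases hrange : ∃ w, e w = v
  · obtain ⟨w, rfl⟩ := hrange
    rw [he.extend_apply]
    exact hβ w b hv
  · rw [extend_apply' _ _ _ hrange, hv, Option.getD_some]

theorem implicantF_comp_iff {e : W → V} (he : Injective e) (ρ : V → Option Bool)
    (f : (W → Bool) → Bool) :
    implicantF ρ (fun α => f fun w => α (e w)) ↔ implicantF (fun w => ρ (e w)) f := by
  refine ⟨fun h β hβ => ?_, fun h α hα => h _ (hα.comp e)⟩
  simpa only [he.extend_apply] using h _ (extendsR_extend he hβ)

theorem implicantF_and_iff (ρ : V → Option Bool) (f g : (V → Bool) → Bool) :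
    implicantF ρ (fun α => f α && g α) ↔ implicantF ρ f ∧ implicantF ρ g := by
  simp only [implicantF, Bool.and_eq_true, imp_and, forall_and]

end Restriction

section Sum

variable {V₁ V₂ : Type*} (f₁ : (V₁ → Bool) → Bool) (f₂ : (V₂ → Bool) → Bool)

theorem implicantF_sum_and_iff (ρ : V₁ ⊕ V₂ → Option Bool) :
    implicantF ρ (fun α => f₁ (fun v => α (Sum.inl v)) && f₂ (fun v => α (Sum.inr v))) ↔
      implicantF (fun v => ρ (Sum.inl v)) f₁ ∧ implicantF (fun v => ρ (Sum.inr v)) f₂ :=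
  (implicantF_and_iff ρ _ _).trans <|
    and_congr (implicantF_comp_iff Sum.inl_injective ρ f₁)
      (implicantF_comp_iff Sum.inr_injective ρ f₂)

theorem primeImplicantF_sum_and_iff [DecidableEq V₁] [DecidableEq V₂]
    (ρ : V₁ ⊕ V₂ → Option Bool) :
    primeImplicantF ρ (fun α => f₁ (fun v => α (Sum.inl v)) && f₂ (fun v => α (Sum.inr v))) ↔
      primeImplicantF (fun v => ρ (Sum.inl v)) f₁ ∧
        primeImplicantF (fun v => ρ (Sum.inr v)) f₂ := by
  simp only [primeImplicantF, implicantF_sum_and_iff, Sum.forall, unfix,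
    update_comp_eq_of_injective' ρ Sum.inl_injective,
    update_comp_eq_of_injective' ρ Sum.inr_injective,
    update_comp_eq_of_forall_ne' ρ _ fun _ => Sum.inr_ne_inl,
    update_comp_eq_of_forall_ne' ρ _ fun _ => Sum.inl_ne_inr]
  constructor
  · rintro ⟨⟨h₁, h₂⟩, min₁, min₂⟩
    exact ⟨⟨h₁, fun w hw h => min₁ w hw ⟨h, h₂⟩⟩, ⟨h₂, fun w hw h => min₂ w hw ⟨h₁, h⟩⟩⟩
  · rintro ⟨⟨h₁, min₁⟩, h₂, min₂⟩
    exact ⟨⟨h₁, h₂⟩, fun w hw h => min₁ w hw h.1, fun w hw h => min₂ w hw h.2⟩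

def primeImplicantsSumEquiv [DecidableEq V₁] [DecidableEq V₂] :
    {ρ : V₁ ⊕ V₂ → Option Bool | primeImplicantF ρ
        (fun α => f₁ (fun v => α (Sum.inl v)) && f₂ (fun v => α (Sum.inr v)))} ≃
      {ρ₁ : V₁ → Option Bool | primeImplicantF ρ₁ f₁} ×
        {ρ₂ : V₂ → Option Bool | primeImplicantF ρ₂ f₂} :=
  ((Equiv.sumArrowEquivProdArrow V₁ V₂ (Option Bool)).subtypeEquiv
    (primeImplicantF_sum_and_iff f₁ f₂)).trans Equiv.subtypeProdEquivProd

end Sum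

theorem prime_implicants_of_conjunction {V₁ V₂ : Type*} [DecidableEq V₁] [DecidableEq V₂]
    (f₁ : (V₁ → Bool) → Bool) (f₂ : (V₂ → Bool) → Bool) :
    (∀ ρ : V₁ ⊕ V₂ → Option Bool,
       primeImplicantF ρ
         (fun α => f₁ (fun v => α (Sum.inl v)) && f₂ (fun v => α (Sum.inr v))) ↔
       (primeImplicantF (fun v => ρ (Sum.inl v)) f₁ ∧
        primeImplicantF (fun v => ρ (Sum.inr v)) f₂)) ∧
    {ρ : V₁ ⊕ V₂ → Option Bool | primeImplicantF ρ
        (fun α => f₁ (fun v => α (Sum.inl v)) && f₂ (fun v => α (Sum.inr v)))}.ncard =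
      {ρ₁ : V₁ → Option Bool | primeImplicantF ρ₁ f₁}.ncard *
      {ρ₂ : V₂ → Option Bool | primeImplicantF ρ₂ f₂}.ncard := by
  refine ⟨primeImplicantF_sum_and_iff f₁ f₂, ?_⟩
  simp only [← Nat.card_coe_set_eq, ← Nat.card_prod]
  exact Nat.card_congr (primeImplicantsSumEquiv f₁ f₂)
end

section
/- For every n divisible by 3, m(n,2) ≥ 3^{n/3}, where m(n,2) is the maximum number of prime implicants over 2-CNF formulas on n variables. -/
variable {V : Type*}

/-! The clauses of `Tfml m` form `m` disjoint triangles `(x₀ ∨ x₁) ∧ (x₁ ∨ x₂) ∧ (x₀ ∨ x₂)`.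
Choosing in every triangle one variable to leave free and setting the other two true gives
`3 ^ m` distinct implicants, and each is prime: after unfixing a true variable `a` of block `i`,
both `a` and the chosen variable of block `i` are free, and setting them false falsifies the
clause between them. Renaming the variables along `Fin m × Fin 3 ≃ Fin (3 * m)` preserves
prime implicants. -/

section Renaming

variable {W : Type*}

theorem extendsR_comp_equiv (e : V ≃ W) (α : W → Bool) (ρ : W → Option Bool) :
    extendsR (α ∘ e) (ρ ∘ e) ↔ extendsR α ρ :=
  ⟨fun h w b hw => by simpa using h (e.symm w) b (by simpa using hw),
    fun h v b hv => h (e v) b hv⟩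

namespace CNF2

def rename (e : V → W) (F : CNF2 V) : CNF2 W :=
  F.map (Prod.map (Prod.map e id) (Prod.map e id))

theorem sat2_rename (e : V → W) (F : CNF2 V) (α : W → Bool) :
    sat2 α (F.rename e) ↔ sat2 (α ∘ e) F := by
  simp only [sat2, rename, List.forall_mem_map]
  rfl

theorem implicant2_rename (e : V ≃ W) (F : CNF2 V) (ρ : W → Option Bool) :
    implicant2 ρ (F.rename e) ↔ implicant2 (ρ ∘ e) F := by
  refine ⟨fun h β hβ => ?_, fun h α hα =>
    (sat2_rename e F α).2 (h _ ((extendsR_comp_equiv e α ρ).2 hα))⟩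
  have hβ' : extendsR (β ∘ e.symm) ρ := by
    rw [← extendsR_comp_equiv e]
    simpa [Function.comp_def] using hβ
  simpa [sat2_rename, Function.comp_def] using h _ hβ'

theorem primeImplicant2_rename [DecidableEq V] [DecidableEq W] (e : V ≃ W) (F : CNF2 V)
    (ρ : W → Option Bool) :
    primeImplicant2 ρ (F.rename e) ↔ primeImplicant2 (ρ ∘ e) F := by
  have unfix_comp : ∀ v, unfix ρ (e v) ∘ e = unfix (ρ ∘ e) v := fun v => by
    simp only [unfix, Function.update_comp_equiv, Equiv.symm_apply_apply]
  unfold primeImplicant2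
  rw [← e.forall_congr_right]
  simp only [implicant2_rename, unfix_comp, Function.comp_apply]

theorem ncard_primeImplicant2_rename [DecidableEq V] [DecidableEq W] (e : V ≃ W) (F : CNF2 V) :
    {ρ : W → Option Bool | primeImplicant2 ρ (F.rename e)}.ncard =
      {ρ : V → Option Bool | primeImplicant2 ρ F}.ncard := by
  have hpre : {ρ : W → Option Bool | primeImplicant2 ρ (F.rename e)} =
      (· ∘ e) ⁻¹' {ρ | primeImplicant2 ρ F} := by
    ext ρ
    exact primeImplicant2_rename e F ρ
  rw [hpre, Set.ncard_preimage_of_injective_subset_range e.surjective.injective_comp_right]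
  intro ρ _
  exact ⟨ρ ∘ e.symm, by simp [Function.comp_assoc]⟩

end CNF2

end Renaming

section Triangles

variable {m : ℕ}

theorem mem_Tfml_iff {cl : Clause2 (Fin m × Fin 3)} :
    cl ∈ Tfml m ↔ ∃ i a b, a < b ∧ cl = (((i, a), true), ((i, b), true)) := by
  simp only [Tfml, List.mem_flatMap, List.mem_finRange, List.mem_cons, List.not_mem_nil,
    or_false, true_and]
  constructor
  · rintro ⟨i, rfl | rfl | rfl⟩
    exacts [⟨i, 0, 1, by decide, rfl⟩, ⟨i, 1, 2, by decide, rfl⟩, ⟨i, 0, 2, by decide, rfl⟩]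
  · rintro ⟨i, a, b, hab, rfl⟩
    refine ⟨i, ?_⟩
    fin_cases a <;> fin_cases b <;> simp_all

def trueExceptChosen (c : Fin m → Fin 3) : Fin m × Fin 3 → Option Bool :=
  fun v => if v.2 = c v.1 then none else some true

theorem trueExceptChosen_injective : Function.Injective (trueExceptChosen (m := m)) := by
  intro c c' h
  funext i
  simpa [trueExceptChosen] using congrFun h (i, c i)

theorem implicant2_trueExceptChosen (c : Fin m → Fin 3) :
    implicant2 (trueExceptChosen c) (Tfml m) := by
  intro α hα cl hcl
  obtain ⟨i, a, b, hab, rfl⟩ := mem_Tfml_iff.1 hcl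
  have hα' : ∀ x, x ≠ c i → evalLit α ((i, x), true) = true := fun x hx => by
    simp [evalLit, hα (i, x) true (by simp [trueExceptChosen, hx])]
  by_cases ha : a = c i
  · exact Or.inr (hα' b (ha ▸ hab.ne'))
  · exact Or.inl (hα' a ha)

theorem primeImplicant2_trueExceptChosen (c : Fin m → Fin 3) :
    primeImplicant2 (trueExceptChosen c) (Tfml m) := by
  refine ⟨implicant2_trueExceptChosen c, ?_⟩
  rintro ⟨i, a⟩ hfixed himp
  have ha : a ≠ c i := fun h => hfixed (by simp [trueExceptChosen, h])
  let α : Fin m × Fin 3 → Bool := fun w => decide (w ≠ (i, a) ∧ w ≠ (i, c i))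
  have hext : extendsR α (unfix (trueExceptChosen c) (i, a)) := by
    intro w b hw
    rcases eq_or_ne w (i, a) with rfl | hwa
    · simp [unfix] at hw
    · simp only [unfix, Function.update_of_ne hwa, trueExceptChosen] at hw
      split_ifs at hw with hw2
      cases hw
      have hwc : w ≠ (i, c i) := by rintro rfl; exact hw2 rfl
      simp [α, hwa, hwc]
  have hsat := himp α hext
  rcases lt_or_gt_of_ne ha with h | h
  · simpa [evalLit, α] using hsat _ (mem_Tfml_iff.2 ⟨i, a, c i, h, rfl⟩)
  · simpa [evalLit, α] using hsat _ (mem_Tfml_iff.2 ⟨i, c i, a, h, rfl⟩)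

theorem three_pow_le_ncard_primeImplicant2_Tfml :
    3 ^ m ≤ {ρ : Fin m × Fin 3 → Option Bool | primeImplicant2 ρ (Tfml m)}.ncard := by
  calc 3 ^ m = (Set.range (trueExceptChosen (m := m))).ncard := by
        simp [Set.ncard_range_of_injective trueExceptChosen_injective]
    _ ≤ _ := Set.ncard_le_ncard (Set.range_subset_iff.2 primeImplicant2_trueExceptChosen)

end Triangles

theorem m_n_2_lower_bound : ∀ n : ℕ, 3 ∣ n →
    ∃ F : CNF2 (Fin n),
      3 ^ (n / 3) ≤ {ρ : Fin n → Option Bool | primeImplicant2 ρ F}.ncard := by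
  rintro n ⟨m, rfl⟩
  let e : Fin m × Fin 3 ≃ Fin (3 * m) := finProdFinEquiv.trans (finCongr (mul_comm m 3))
  refine ⟨(Tfml m).rename e, ?_⟩
  rw [CNF2.ncard_primeImplicant2_rename, Nat.mul_div_cancel_left m three_pos]
  exact three_pow_le_ncard_primeImplicant2_Tfml
end
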